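/- Let i ≥ 2 be an integer, let T1 and T2 be rooted binary phylogenetic trees on the same taxon set X, and let f be a character using at most i states that attains d^i_MP(T1,T2), with l_f(T1) < l_f(T2). Then there exists a character f' using at most i states that attains d^i_MP(T1,T2), such that l_{f'}(T1) < l_{f'}(T2) and, for every internal vertex u of T1 both of whose children are leaves (i.e. the children form a cherry), f' assigns both children of u the same state. -/

import Mathlib

namespace MPDist

/-- A rooted binary phylogenetic tree: leaves are labelled by taxa,
every internal vertex (including the root) has exactly two children. -/
inductive PTree (X : Type) : Type
  | leaf : X → PTree X
  | node : PTree X → PTree X → PTree X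

namespace PTree

/-- The list of leaf labels (taxa) of a tree. -/
def leaves {X : Type} : PTree X → List X
  | .leaf x => [x]
  | .node l r => l.leaves ++ r.leaves

/-- Relabelling of taxa. -/
def map {X Y : Type} (φ : X → Y) : PTree X → PTree Y
  | .leaf x => .leaf (φ x)
  | .node l r => .node (l.map φ) (r.map φ)

end PTree

/-- `T` is a phylogenetic tree on the taxon set `X`:
its leaves are bijectively labelled by the elements of `X`. -/
def IsPhylo {X : Type} (T : PTree X) : Prop :=
  T.leaves.Nodup ∧ ∀ x : X, x ∈ T.leaves

/-- A state-labelled binary tree (an extension assigns a state to every vertex). -/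
inductive ETree (C : Type) : Type
  | leaf : C → ETree C
  | node : C → ETree C → ETree C → ETree C

namespace ETree

/-- The state at the root. -/
def root {C : Type} : ETree C → C
  | .leaf c => c
  | .node c _ _ => c

/-- The number of edges `{u,v}` with different states at the two endpoints
(substitutions/mutations). -/
def changes {C : Type} [DecidableEq C] : ETree C → ℕ
  | .leaf _ => 0
  | .node c l r =>
      ((if l.root = c then 0 else 1) + (if r.root = c then 0 else 1)) +
        (l.changes + r.changes)

end ETree

/-- `g` is an extension of the character `f` to the tree `T`: it has the same
shape as `T`, assigns a state to every vertex, and agrees with `f` on the taxa. -/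
inductive IsExtension {X C : Type} (f : X → C) : PTree X → ETree C → Prop
  | leaf (x : X) : IsExtension f (.leaf x) (.leaf (f x))
  | node {l r : PTree X} {gl gr : ETree C} (c : C) :
      IsExtension f l gl → IsExtension f r gr →
      IsExtension f (.node l r) (.node c gl gr)

/-- The parsimony score `l_f(T)`: the minimum number of mutation edges
over all extensions of `f` to `T`. -/
noncomputable def pscore {X C : Type} [DecidableEq C] (f : X → C) (T : PTree X) : ℕ :=
  sInf { k : ℕ | ∃ g : ETree C, IsExtension f T g ∧ g.changes = k }

/-- The MP distance `d_MP(T1,T2) = max_f |l_f(T1) − l_f(T2)|`, the maximum taken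
over all characters `f` on the taxon set (states drawn from `ℕ`). -/
noncomputable def dMP {X : Type} (T1 T2 : PTree X) : ℕ :=
  sSup { k : ℕ | ∃ f : X → ℕ, k = ((pscore f T1 : ℤ) - (pscore f T2 : ℤ)).natAbs }

/-- `d^i_MP(T1,T2)`: as `dMP`, but over characters using at most `i` states. -/
noncomputable def dMPk {X : Type} (i : ℕ) (T1 T2 : PTree X) : ℕ :=
  sSup { k : ℕ | ∃ f : X → Fin i, k = ((pscore f T1 : ℤ) - (pscore f T2 : ℤ)).natAbs }

/-- `max_f (l_f(T2) − l_f(T1))` over all characters `f`. -/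
noncomputable def maxDiff {X : Type} (T1 T2 : PTree X) : ℤ :=
  sSup { d : ℤ | ∃ f : X → ℕ, d = (pscore f T2 : ℤ) - (pscore f T1 : ℤ) }

/-- `max_f (l_f(T2) − l_f(T1))` over all characters `f` with at most `i` states. -/
noncomputable def maxDiffk {X : Type} (i : ℕ) (T1 T2 : PTree X) : ℤ :=
  sSup { d : ℤ | ∃ f : X → Fin i, d = (pscore f T2 : ℤ) - (pscore f T1 : ℤ) }

/-- `gap(T1,T2) = |max_f(l_f(T2)−l_f(T1)) − max_f(l_f(T1)−l_f(T2))|`. -/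
noncomputable def gap {X : Type} (T1 T2 : PTree X) : ℤ :=
  |maxDiff T1 T2 - maxDiff T2 T1|

/-- `gap` restricted to characters with at most `i` states. -/
noncomputable def gapk {X : Type} (i : ℕ) (T1 T2 : PTree X) : ℤ :=
  |maxDiffk i T1 T2 - maxDiffk i T2 T1|

/-- `s` occurs as a (rooted) subtree of `t`. -/
inductive IsSubtree {X : Type} : PTree X → PTree X → Prop
  | refl (t : PTree X) : IsSubtree t t
  | left {s l r : PTree X} : IsSubtree s l → IsSubtree s (.node l r)
  | right {s l r : PTree X} : IsSubtree s r → IsSubtree s (.node l r)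

/-- Taxa `a`, `b` form a cherry of `T`: they are leaves with a common parent. -/
def IsCherry {X : Type} (T : PTree X) (a b : X) : Prop :=
  IsSubtree (.node (.leaf a) (.leaf b)) T

/-- Relabel a tree on taxa `ℕ` by shifting all labels up by `s` (fresh copies). -/
def shiftT (s : ℕ) (T : PTree ℕ) : PTree ℕ := T.map (fun x => x + s)

/-- `T_a = (((((2,3),4),5),6),1)` on taxa `{1,…,6}` (taxon `j` encoded as `j-1`). -/
def Ta6 : PTree ℕ :=
  .node (.node (.node (.node (.node (.leaf 1) (.leaf 2)) (.leaf 3)) (.leaf 4)) (.leaf 5)) (.leaf 0)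

/-- `T_b = ((((2,6),(3,4)),5),1)` on taxa `{1,…,6}` (taxon `j` encoded as `j-1`). -/
def Tb6 : PTree ℕ :=
  .node (.node (.node (.node (.leaf 1) (.leaf 5)) (.node (.leaf 2) (.leaf 3))) (.leaf 4)) (.leaf 0)

/-- `T_A`: two disjoint copies of `T_a` joined under a new root (12 taxa). -/
def TA12 : PTree ℕ := .node Ta6 (shiftT 6 Ta6)

/-- `T_B`: two disjoint copies of `T_b` joined under a new root (12 taxa). -/
def TB12 : PTree ℕ := .node Tb6 (shiftT 6 Tb6)

/-- `TkA k` is the tree `T^{k+1}_A`: `k+1` disjoint copies of `T_A` arranged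
along a caterpillar backbone (so `TkA 0 = T^1_A = T_A`). -/
def TkA : ℕ → PTree ℕ
  | 0 => TA12
  | k+1 => .node (TkA k) (shiftT (12*(k+1)) TA12)

/-- `TkB k` is the tree `T^{k+1}_B`. -/
def TkB : ℕ → PTree ℕ
  | 0 => TB12
  | k+1 => .node (TkB k) (shiftT (12*(k+1)) TB12)

/-- `T_a = (((5,(6,4)),3),((1,(8,2)),7))` on taxa `{1,…,8}` (taxon `j` encoded as `j-1`). -/
def Ta8 : PTree ℕ :=
  .node (.node (.node (.leaf 4) (.node (.leaf 5) (.leaf 3))) (.leaf 2))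
        (.node (.node (.leaf 0) (.node (.leaf 7) (.leaf 1))) (.leaf 6))

/-- `T_b = (((7,((4,2),6)),3),(8,(1,5)))` on taxa `{1,…,8}` (taxon `j` encoded as `j-1`). -/
def Tb8 : PTree ℕ :=
  .node (.node (.node (.leaf 6) (.node (.node (.leaf 3) (.leaf 1)) (.leaf 5))) (.leaf 2))
        (.node (.leaf 7) (.node (.leaf 0) (.leaf 4)))

/-- `T_A` (2-state construction): two disjoint copies of `T_a` under a new root (16 taxa). -/
def TA16 : PTree ℕ := .node Ta8 (shiftT 8 Ta8)

/-- `T_B` (2-state construction): two disjoint copies of `T_b` under a new root (16 taxa). -/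
def TB16 : PTree ℕ := .node Tb8 (shiftT 8 Tb8)

/-- `T_AA`: two disjoint copies of `T_A` under a new root (32 taxa). -/
def TAA : PTree ℕ := .node TA16 (shiftT 16 TA16)

/-- `T_BB`: two disjoint copies of `T_B` under a new root (32 taxa). -/
def TBB : PTree ℕ := .node TB16 (shiftT 16 TB16)

/-- `TkAA k` is the tree `T^{k+1}_AA` (so `TkAA 0 = T^1_AA = T_AA`). -/
def TkAA : ℕ → PTree ℕ
  | 0 => TAA
  | k+1 => .node (TkAA k) (shiftT (32*(k+1)) TAA)

/-- `TkBB k` is the tree `T^{k+1}_BB`. -/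
def TkBB : ℕ → PTree ℕ
  | 0 => TBB
  | k+1 => .node (TkBB k) (shiftT (32*(k+1)) TBB)


/-!
Among the optimal characters `f` with `l_f(T1) < l_f(T2)`, take one minimising `l_f(T1)`.
If a cherry `{a, b}` of `T1` were bichromatic, look at an optimal extension of `f` to `T1`:
recolouring one of `a`, `b` (and possibly their parent) removes a change, so `l(T1)` drops by
at least one. Since a single taxon changed state, `l(T2)` drops by at most one. Hence
`l(T2) - l(T1)` does not decrease, the new character is still optimal, and minimality is
contradicted.
-/

namespace ETree

variable {C : Type} [DecidableEq C]

def changesWithParent (g : ETree C) (c : C) : ℕ :=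
  g.changes + if g.root = c then 0 else 1

@[simp]
lemma changesWithParent_leaf (x c : C) :
    (leaf x).changesWithParent c = if x = c then 0 else 1 :=
  Nat.zero_add _

@[simp]
lemma changesWithParent_node (c d : C) (l r : ETree C) :
    (node c l r).changesWithParent d =
      l.changesWithParent c + r.changesWithParent c + if c = d then 0 else 1 := by
  -- `simp` cannot reduce the `root` hidden in the decidability instances
  change _ + (l.changes + r.changes) + (if c = d then 0 else 1) = _
  unfold changesWithParent
  omega

lemma changesWithParent_root (g : ETree C) : g.changesWithParent g.root = g.changes := by
  simp [changesWithParent]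

lemma changes_le_changesWithParent (g : ETree C) (c : C) :
    g.changes ≤ g.changesWithParent c :=
  Nat.le_add_right _ _

end ETree

namespace PTree

variable {X : Type}

def leftExtension {C : Type} (f : X → C) : PTree X → ETree C
  | .leaf x => .leaf (f x)
  | .node l r => .node (l.leftExtension f).root (l.leftExtension f) (r.leftExtension f)

lemma isExtension_leftExtension {C : Type} (f : X → C) (T : PTree X) :
    IsExtension f T (T.leftExtension f) := by
  induction T with
  | leaf x => exact .leaf x
  | node l r ihl ihr => exact .node _ ihl ihr

lemma changes_leftExtension_lt_length {C : Type} [DecidableEq C] (f : X → C) (T : PTree X) :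
    (T.leftExtension f).changes < T.leaves.length := by
  induction T with
  | leaf x => simp [leftExtension, ETree.changes, leaves]
  | node l r ihl ihr =>
    simp only [leftExtension, ETree.changes, leaves, List.length_append]
    split_ifs <;> omega

end PTree

lemma IsSubtree.leaves_subset {X : Type} {s T : PTree X} (h : IsSubtree s T) :
    s.leaves ⊆ T.leaves := by
  induction h with
  | refl => exact List.Subset.refl _
  | left _ ih => exact List.Subset.trans ih (List.subset_append_left _ _)
  | right _ ih => exact List.Subset.trans ih (List.subset_append_right _ _)

lemma IsExtension.congr {X C : Type} {f f' : X → C} {T : PTree X} {g : ETree C}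
    (hg : IsExtension f T g) (h : ∀ x ∈ T.leaves, f x = f' x) : IsExtension f' T g := by
  induction hg with
  | leaf x => exact h x (List.mem_singleton_self x) ▸ .leaf x
  | node c _ _ ihl ihr =>
    exact .node c (ihl fun x hx => h x (List.mem_append_left _ hx))
      (ihr fun x hx => h x (List.mem_append_right _ hx))

section Parsimony

variable {X C : Type} [DecidableEq C]

lemma pscore_le_changes {f : X → C} {T : PTree X} {g : ETree C} (hg : IsExtension f T g) :
    pscore f T ≤ g.changes :=
  Nat.sInf_le ⟨g, hg, rfl⟩

lemma exists_isExtension_changes_eq_pscore (f : X → C) (T : PTree X) :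
    ∃ g, IsExtension f T g ∧ g.changes = pscore f T :=
  Nat.sInf_mem (s := {k | ∃ g : ETree C, IsExtension f T g ∧ g.changes = k})
    ⟨_, _, T.isExtension_leftExtension f, rfl⟩

lemma pscore_lt_length (f : X → C) (T : PTree X) : pscore f T < T.leaves.length :=
  (pscore_le_changes (T.isExtension_leftExtension f)).trans_lt
    (T.changes_leftExtension_lt_length f)

/-- Keep the internal states of `g'`: each leaf labelled `b` costs at most one extra change. -/
lemma IsExtension.exists_changesWithParent_le_add_count [DecidableEq X] {f f' : X → C} {b : X}
    (h : ∀ x, x ≠ b → f x = f' x) {T : PTree X} {g' : ETree C} (hg' : IsExtension f' T g') :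
    ∃ g, IsExtension f T g ∧
      ∀ c, g.changesWithParent c ≤ g'.changesWithParent c + T.leaves.count b := by
  induction hg' with
  | leaf x =>
    refine ⟨.leaf (f x), .leaf x, fun c => ?_⟩
    by_cases hx : x = b
    · subst hx
      simp only [ETree.changesWithParent_leaf, PTree.leaves, List.count_singleton_self]
      split_ifs <;> omega
    · simp [h x hx]
  | node c _ _ ihl ihr =>
    obtain ⟨gl, hgl, hl⟩ := ihl
    obtain ⟨gr, hgr, hr⟩ := ihr
    refine ⟨.node c gl gr, .node c hgl hgr, fun d => ?_⟩
    simp only [ETree.changesWithParent_node, PTree.leaves, List.count_append]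
    have := hl c
    have := hr c
    omega

lemma pscore_le_pscore_add_count [DecidableEq X] {f f' : X → C} {b : X}
    (h : ∀ x, x ≠ b → f x = f' x) (T : PTree X) :
    pscore f T ≤ pscore f' T + T.leaves.count b := by
  obtain ⟨g', hg', hg'opt⟩ := exists_isExtension_changes_eq_pscore f' T
  obtain ⟨g, hg, hle⟩ := hg'.exists_changesWithParent_le_add_count h
  calc pscore f T ≤ g.changesWithParent g'.root :=
        (pscore_le_changes hg).trans (g.changes_le_changesWithParent _)
    _ ≤ g'.changes + T.leaves.count b := g'.changesWithParent_root ▸ hle _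
    _ = pscore f' T + T.leaves.count b := by rw [hg'opt]

lemma pscore_le_pscore_update_add_one [DecidableEq X] {T : PTree X} (hT : T.leaves.Nodup)
    (f : X → C) (v : X) (w : C) : pscore f T ≤ pscore (Function.update f v w) T + 1 :=
  (pscore_le_pscore_add_count (fun _ hx => (Function.update_of_ne hx _ _).symm) T).trans
    (Nat.add_le_add_left (List.nodup_iff_count_le_one.mp hT v) _)

/-- Outside `s` the extension is kept; as the improvement on `s` holds whatever the state of
its parent, it survives at every ancestor. -/
lemma IsSubtree.exists_isExtension_changesWithParent_lt {s T : PTree X} (hsT : IsSubtree s T)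
    (hT : T.leaves.Nodup) {f : X → C} {g : ETree C} (hg : IsExtension f T g) :
    ∃ gs, IsExtension f s gs ∧ ∀ (f' : X → C) (gs' : ETree C),
      (∀ x ∉ s.leaves, f' x = f x) → IsExtension f' s gs' →
      (∀ c, gs'.changesWithParent c < gs.changesWithParent c) →
      ∃ g', IsExtension f' T g' ∧ ∀ c, g'.changesWithParent c < g.changesWithParent c := by
  induction hsT generalizing g with
  | refl => exact ⟨g, hg, fun f' gs' _ hgs' hlt => ⟨gs', hgs', hlt⟩⟩
  | @left l r hsl ih =>
    obtain ⟨hl, -, hdisj⟩ := List.nodup_append.mp hT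
    cases hg with
    | node c hgl hgr =>
      obtain ⟨gs, hgs, hlift⟩ := ih hl hgl
      refine ⟨gs, hgs, fun f' gs' hout hgs' hlt => ?_⟩
      obtain ⟨gl', hgl', hlt'⟩ := hlift f' gs' hout hgs' hlt
      have hgr' := hgr.congr fun x hx =>
        (hout x fun hxs => hdisj x (hsl.leaves_subset hxs) x hx rfl).symm
      refine ⟨_, .node c hgl' hgr', fun d => ?_⟩
      simp only [ETree.changesWithParent_node]
      have := hlt' c
      omega
  | @right l r hsr ih =>
    obtain ⟨-, hr, hdisj⟩ := List.nodup_append.mp hT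
    cases hg with
    | node c hgl hgr =>
      obtain ⟨gs, hgs, hlift⟩ := ih hr hgr
      refine ⟨gs, hgs, fun f' gs' hout hgs' hlt => ?_⟩
      obtain ⟨gr', hgr', hlt'⟩ := hlift f' gs' hout hgs' hlt
      have hgl' := hgl.congr fun x hx =>
        (hout x fun hxs => hdisj x hx x (hsr.leaves_subset hxs) rfl).symm
      refine ⟨_, .node c hgl' hgr', fun d => ?_⟩
      simp only [ETree.changesWithParent_node]
      have := hlt' c
      omega

/-- On a bichromatic cherry below a vertex in state `c`, recolour a leaf not in state `c`
(and, if neither leaf is in state `c`, the vertex as well). -/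
lemma exists_update_changesWithParent_lt_of_cherry [DecidableEq X] {f : X → C} {a b : X}
    (hne : f a ≠ f b) {gs : ETree C} (hgs : IsExtension f (.node (.leaf a) (.leaf b)) gs) :
    ∃ v ∈ [a, b], ∃ w gs',
      IsExtension (Function.update f v w) (.node (.leaf a) (.leaf b)) gs' ∧
        ∀ d, gs'.changesWithParent d < gs.changesWithParent d := by
  have hab : a ≠ b := fun h => hne (h ▸ rfl)
  have hext_b : ∀ c, IsExtension (Function.update f b (f a)) (.node (.leaf a) (.leaf b))
      (.node c (.leaf (f a)) (.leaf (f a))) := fun c => by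
    simpa [Function.update_of_ne hab] using
      IsExtension.node (f := Function.update f b (f a)) c (.leaf a) (.leaf b)
  have hext_a : ∀ c, IsExtension (Function.update f a (f b)) (.node (.leaf a) (.leaf b))
      (.node c (.leaf (f b)) (.leaf (f b))) := fun c => by
    simpa [Function.update_of_ne hab.symm] using
      IsExtension.node (f := Function.update f a (f b)) c (.leaf a) (.leaf b)
  rcases hgs with _ | ⟨c, ⟨⟩, ⟨⟩⟩
  by_cases hca : f a = c
  · refine ⟨b, by simp, f a, _, hext_b c, fun d => ?_⟩
    simp [hca, Ne.symm (hca ▸ hne)]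
  by_cases hcb : f b = c
  · refine ⟨a, by simp, f b, _, hext_a c, fun d => ?_⟩
    simp [hca, hcb]
  · refine ⟨b, by simp, f a, _, hext_b (f a), fun d => ?_⟩
    simp [hca, hcb]
    split_ifs <;> omega

lemma exists_pscore_update_lt_of_isCherry [DecidableEq X] {T : PTree X} (hT : T.leaves.Nodup)
    {f : X → C} {a b : X} (hab : IsCherry T a b) (hne : f a ≠ f b) :
    ∃ v w, pscore (Function.update f v w) T < pscore f T := by
  obtain ⟨g, hg, hgopt⟩ := exists_isExtension_changes_eq_pscore f T
  obtain ⟨gs, hgs, hlift⟩ := IsSubtree.exists_isExtension_changesWithParent_lt hab hT hg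
  obtain ⟨v, hv, w, gs', hgs', hlt⟩ := exists_update_changesWithParent_lt_of_cherry hne hgs
  obtain ⟨g', hg', hlt'⟩ :=
    hlift _ gs' (fun x hx => Function.update_of_ne (fun h => hx (by rw [h]; exact hv)) _ _) hgs' hlt
  refine ⟨v, w, ?_⟩
  calc pscore _ T ≤ g'.changesWithParent g.root :=
        (pscore_le_changes hg').trans (g'.changes_le_changesWithParent _)
    _ < g.changesWithParent g.root := hlt' _
    _ = pscore f T := by rw [g.changesWithParent_root, hgopt]

end Parsimony

section BoundedStates

variable {X : Type} {i : ℕ} {T1 T2 : PTree X}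

lemma natAbs_le_dMPk (f : X → Fin i) :
    ((pscore f T1 : ℤ) - (pscore f T2 : ℤ)).natAbs ≤ dMPk i T1 T2 := by
  refine le_csSup ⟨T1.leaves.length + T2.leaves.length, ?_⟩ ⟨f, rfl⟩
  rintro _ ⟨g, rfl⟩
  have := pscore_lt_length g T1
  have := pscore_lt_length g T2
  omega

lemma natAbs_eq_dMPk_of_le {f f' : X → Fin i}
    (hopt : ((pscore f T1 : ℤ) - (pscore f T2 : ℤ)).natAbs = dMPk i T1 T2)
    (hlt : pscore f T1 < pscore f T2)
    (hle : (pscore f T2 : ℤ) - pscore f T1 ≤ (pscore f' T2 : ℤ) - pscore f' T1) :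
    ((pscore f' T1 : ℤ) - (pscore f' T2 : ℤ)).natAbs = dMPk i T1 T2 ∧
      pscore f' T1 < pscore f' T2 := by
  have := natAbs_le_dMPk (T1 := T1) (T2 := T2) f'
  omega

end BoundedStates

theorem optimal_monochromatic_cherries_bounded_general {X : Type} (i : ℕ)
    (T1 T2 : PTree X) (h1 : IsPhylo T1) (h2 : IsPhylo T2) (f : X → Fin i)
    (hopt : ((pscore f T1 : ℤ) - (pscore f T2 : ℤ)).natAbs = dMPk i T1 T2)
    (hlt : pscore f T1 < pscore f T2) :
    ∃ f' : X → Fin i,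
      ((pscore f' T1 : ℤ) - (pscore f' T2 : ℤ)).natAbs = dMPk i T1 T2 ∧
      pscore f' T1 < pscore f' T2 ∧
      ∀ a b : X, IsCherry T1 a b → f' a = f' b := by
  classical
  obtain ⟨f₀, ⟨hopt₀, hlt₀⟩, hmin⟩ :=
    (measure fun g : X → Fin i => pscore g T1).wf.has_min
      {g | ((pscore g T1 : ℤ) - (pscore g T2 : ℤ)).natAbs = dMPk i T1 T2 ∧
        pscore g T1 < pscore g T2} ⟨f, hopt, hlt⟩
  refine ⟨f₀, hopt₀, hlt₀, fun a b hab => by_contra fun hne => ?_⟩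
  obtain ⟨v, w, hdec⟩ := exists_pscore_update_lt_of_isCherry h1.1 hab hne
  have hT2 := pscore_le_pscore_update_add_one h2.1 f₀ v w
  exact hmin _ (natAbs_eq_dMPk_of_le hopt₀ hlt₀ (by omega)) hdec

/-- the cherry-monochromatization of Statement 1 also holds for
optimal characters under the bounded-state model `d^i_MP` (`i ≥ 2`). -/
theorem optimal_monochromatic_cherries_bounded {X : Type} (i : ℕ) (hi : 2 ≤ i)
    (T1 T2 : PTree X) (h1 : IsPhylo T1) (h2 : IsPhylo T2) (f : X → Fin i)
    (hopt : ((pscore f T1 : ℤ) - (pscore f T2 : ℤ)).natAbs = dMPk i T1 T2)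
    (hlt : pscore f T1 < pscore f T2) :
    ∃ f' : X → Fin i,
      ((pscore f' T1 : ℤ) - (pscore f' T2 : ℤ)).natAbs = dMPk i T1 T2 ∧
      pscore f' T1 < pscore f' T2 ∧
      ∀ a b : X, IsCherry T1 a b → f' a = f' b :=
  optimal_monochromatic_cherries_bounded_general i T1 T2 h1 h2 f hopt hlt

end MPDist
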